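/- For symmetric positive definite matrices P and P₀, tr(M P₀) = tr((P₀^{1/2} P P₀^{1/2})^{1/2}), where M := P^{1/2}(P^{1/2} P₀ P^{1/2})^{-1/2} P^{1/2}. -/

import Mathlib

open Matrix

open scoped ComplexOrder in
noncomputable def Matrix.PosSemidef.sqrt {n 𝕜 : Type*} [Fintype n] [DecidableEq n] [RCLike 𝕜]
    {A : Matrix n n 𝕜} (hA : A.PosSemidef) : Matrix n n 𝕜 :=
  hA.isHermitian.eigenvectorUnitary.1 * diagonal ((↑) ∘ (√·) ∘ hA.isHermitian.eigenvalues) *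
  (star hA.isHermitian.eigenvectorUnitary : Matrix n n 𝕜)

/-! With `S = P^{1/2}`, `T = P₀^{1/2}` and `X = (S P₀ S)^{1/2}`, the matrix
`Y = T S X⁻¹ S T` is positive semidefinite and
`Y² = T S X⁻¹ (S P₀ S) X⁻¹ S T = T S S T = T P T`, so `Y` is the square root of
`P₀^{1/2} P P₀^{1/2}`. Its trace is `tr(S X⁻¹ S T T) = tr(M P₀)` by cyclicity. -/

namespace Matrix

variable {n 𝕜 : Type*} [Fintype n] [DecidableEq n] [RCLike 𝕜] {A : Matrix n n 𝕜}

open scoped ComplexOrder MatrixOrder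

lemma PosSemidef.sqrt_eq_cfcSqrt (hA : A.PosSemidef) : hA.sqrt = CFC.sqrt A := by
  rw [CFC.sqrt_eq_real_sqrt A hA.nonneg, cfcₙ_eq_cfc (hf0 := Real.sqrt_zero),
    hA.isHermitian.cfc_eq, IsHermitian.cfc, Unitary.conjStarAlgAut_apply]
  rfl

lemma PosSemidef.sqrt_mul_self (hA : A.PosSemidef) : hA.sqrt * hA.sqrt = A := by
  rw [hA.sqrt_eq_cfcSqrt]
  exact CFC.sqrt_mul_sqrt_self A hA.nonneg

lemma PosSemidef.eq_sqrt_of_mul_self_eq {B : Matrix n n 𝕜} (hA : A.PosSemidef)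
    (hB : B.PosSemidef) (h : B * B = A) : B = hA.sqrt := by
  rw [hA.sqrt_eq_cfcSqrt]
  exact (CFC.sqrt_unique h hB.nonneg).symm

lemma PosDef.posDef_sqrt (hA : A.PosDef) : hA.posSemidef.sqrt.PosDef := by
  rw [hA.posSemidef.sqrt_eq_cfcSqrt]
  exact (hA.isStrictlyPositive.sqrt).posDef

lemma conj_inv_mul_self_of_mul_self_eq {R : Type*} [CommRing R] {S T X : Matrix n n R}
    (hX : IsUnit X) (hXX : X * X = S * (T * T) * S) :
    T * S * X⁻¹ * (S * T) * (T * S * X⁻¹ * (S * T)) = T * (S * S) * T := by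
  have hX' : IsUnit X.det := (isUnit_iff_isUnit_det X).mp hX
  calc T * S * X⁻¹ * (S * T) * (T * S * X⁻¹ * (S * T))
      = T * S * X⁻¹ * (S * (T * T) * S) * X⁻¹ * (S * T) := by simp only [mul_assoc]
    _ = T * S * (X⁻¹ * X) * (X * X⁻¹) * (S * T) := by rw [← hXX]; simp only [mul_assoc]
    _ = T * (S * S) * T := by
      rw [nonsing_inv_mul X hX', mul_nonsing_inv X hX']; simp only [mul_one, mul_assoc]

lemma trace_mul_inv_mul_mul_eq_trace_sqrt {P P₀ S T X : Matrix n n 𝕜} (hS : S.IsHermitian)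
    (hT : T.IsHermitian) (hX : X.PosDef) (hSS : S * S = P) (hTT : T * T = P₀)
    (hXX : X * X = S * P₀ * S) (hTPT : (T * P * T).PosSemidef) :
    (S * X⁻¹ * S * P₀).trace = hTPT.sqrt.trace := by
  have hY : (T * S * X⁻¹ * (S * T)).PosSemidef := by
    simpa only [conjTranspose_mul, hS.eq, hT.eq] using
      hX.inv.posSemidef.mul_mul_conjTranspose_same (T * S)
  have hYY : T * S * X⁻¹ * (S * T) * (T * S * X⁻¹ * (S * T)) = T * P * T := by
    rw [conj_inv_mul_self_of_mul_self_eq hX.isUnit (by rw [hTT, hXX]), hSS]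
  rw [← hTPT.eq_sqrt_of_mul_self_eq hY hYY, ← hTT, ← mul_assoc, trace_mul_comm]
  simp only [mul_assoc]

end Matrix

/-- With `M := P^{1/2}(P^{1/2} P₀ P^{1/2})^{-1/2} P^{1/2}`,
`tr(M P₀) = tr((P₀^{1/2} P P₀^{1/2})^{1/2})`. -/
theorem stmt2 {n : ℕ} (P P₀ : Matrix (Fin n) (Fin n) ℝ)
    (hP : P.PosDef) (hP₀ : P₀.PosDef)
    (hmid : (hP.posSemidef.sqrt * P₀ * hP.posSemidef.sqrt).PosSemidef)
    (hmid' : (hP₀.posSemidef.sqrt * P * hP₀.posSemidef.sqrt).PosSemidef) :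
    ((hP.posSemidef.sqrt * (hmid.sqrt)⁻¹ * hP.posSemidef.sqrt) * P₀).trace
      = hmid'.sqrt.trace := by
  have hS := hP.posDef_sqrt
  have hmidPD : (hP.posSemidef.sqrt * P₀ * hP.posSemidef.sqrt).PosDef := by
    simpa only [hS.isHermitian.eq] using
      hP₀.conjTranspose_mul_mul_same (mulVec_injective_iff_isUnit.mpr hS.isUnit)
  exact trace_mul_inv_mul_mul_eq_trace_sqrt hS.isHermitian hP₀.posDef_sqrt.isHermitian
    hmidPD.posDef_sqrt hP.posSemidef.sqrt_mul_self hP₀.posSemidef.sqrt_mul_self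
    hmid.sqrt_mul_self hmid'
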